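/- Let E, Ẽ, F be standard Borel spaces, X ∼ μ on E, X̃ generated from X by a Markov kernel R : E → Ẽ, and X_t generated from X by a Markov kernel P : E → F, with X_t ⊥ X̃ | X. Let P̄(x̃) = ∫ P(x) dπ(x|x̃) be the posterior-predictive kernel, where π(·|x̃) is the regular conditional law of X given X̃. Then E[KL(P(X) ‖ P̄(X̃))] = 0 if and only if P(X) = P̄(X̃) almost surely, which holds if and only if X_t and X are conditionally independent given X̃. In particular, conditioning on a corrupted observation attains the minimal conditional KL risk exactly when X̃ is a sufficient statistic of X for X_t. -/

import Mathlib

open MeasureTheory ProbabilityTheory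
open scoped ENNReal

open Classical in
/-- Kullback–Leibler divergence `KL(ν ‖ ρ) ∈ [0, ∞]`: equal to `∫ log (dν/dρ) dν` when
`ν ≪ ρ` and this integral exists, and `+∞` otherwise. -/
noncomputable def klDiv {α : Type*} [MeasurableSpace α] (ν ρ : Measure α) : ℝ≥0∞ :=
  if ν ≪ ρ ∧ Integrable (llr ν ρ) ν
  then ENNReal.ofReal (∫ x, llr ν ρ x ∂ν)
  else ⊤

/-!
By Gibbs' inequality `KL(ν ‖ ρ) = 0` iff `ν = ρ`, and for kernels into a countably generated
space `a ↦ KL(κ a ‖ η a)` is measurable (it is a `klFun`-integral of the kernel Radon–Nikodym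
derivative). Hence the expected gap vanishes iff `P(X) = P̄(X̃)` almost surely; in particular
`{P(x) = P̄(x̃)}` is a measurable set. Disintegrating the law of `(X̃, X)` through the posterior
`π`, this says that for a.e. `x̃` the kernel `P` equals the constant `P̄(x̃)` `π(x̃)`-a.e., which
is the factorization `π(x̃) ⊗ₘ P = π(x̃) × P̄(x̃)`.
-/

section KL

variable {α : Type*} [MeasurableSpace α]

/-- Mathlib's divergence carries the correction `ρ univ - ν univ`, which vanishes here. -/
lemma klDiv_eq_informationTheory_klDiv (ν ρ : Measure α) [IsProbabilityMeasure ν]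
    [IsProbabilityMeasure ρ] : klDiv ν ρ = InformationTheory.klDiv ν ρ := by
  by_cases h : ν ≪ ρ ∧ Integrable (llr ν ρ) ν
  · rw [klDiv, if_pos h, InformationTheory.klDiv_of_ac_of_integrable h.1 h.2]
    simp
  · rw [klDiv, if_neg h, eq_comm, InformationTheory.klDiv_eq_top_iff]
    exact fun hac hint => h ⟨hac, hint⟩

lemma klDiv_eq_zero_iff {ν ρ : Measure α} [IsProbabilityMeasure ν] [IsProbabilityMeasure ρ] :
    klDiv ν ρ = 0 ↔ ν = ρ := by
  rw [klDiv_eq_informationTheory_klDiv, InformationTheory.klDiv_eq_zero_iff]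

end KL

namespace ProbabilityTheory.Kernel

variable {α γ : Type*} [MeasurableSpace α] [MeasurableSpace γ]
  [MeasurableSpace.CountableOrCountablyGenerated α γ]

lemma measurable_informationTheory_klDiv (κ η : Kernel α γ) [IsFiniteKernel κ]
    [IsFiniteKernel η] : Measurable fun a => InformationTheory.klDiv (κ a) (η a) := by
  classical
  simp_rw [InformationTheory.klDiv_eq_lintegral_klFun]
  refine Measurable.ite (measurableSet_absolutelyContinuous κ η) ?_ measurable_const
  have h_rnDeriv : ∀ a, ∫⁻ x, ENNReal.ofReal
        (InformationTheory.klFun ((κ a).rnDeriv (η a) x).toReal) ∂η a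
      = ∫⁻ x, ENNReal.ofReal (InformationTheory.klFun (κ.rnDeriv η a x).toReal) ∂η a :=
    fun a => lintegral_congr_ae <| by
      filter_upwards [rnDeriv_eq_rnDeriv_measure (κ := κ) (η := η) (a := a)] with x hx
      rw [hx]
  simp_rw [h_rnDeriv]
  exact Measurable.lintegral_kernel_prod_right (by fun_prop)

lemma measurableSet_eq (κ η : Kernel α γ) [IsFiniteKernel κ] [IsFiniteKernel η] :
    MeasurableSet {a | κ a = η a} := by
  simp_rw [← InformationTheory.klDiv_eq_zero_iff]
  exact measurable_informationTheory_klDiv κ η (measurableSet_singleton 0)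

lemma measurable_klDiv (κ η : Kernel α γ) [IsMarkovKernel κ] [IsMarkovKernel η] :
    Measurable fun a => klDiv (κ a) (η a) := by
  simp_rw [klDiv_eq_informationTheory_klDiv]
  exact measurable_informationTheory_klDiv κ η

lemma lintegral_klDiv_eq_zero_iff (μ : Measure α) (κ η : Kernel α γ) [IsMarkovKernel κ]
    [IsMarkovKernel η] : ∫⁻ a, klDiv (κ a) (η a) ∂μ = 0 ↔ ∀ᵐ a ∂μ, κ a = η a := by
  simp_rw [lintegral_eq_zero_iff (measurable_klDiv κ η), ← klDiv_eq_zero_iff]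
  rfl

end ProbabilityTheory.Kernel

namespace MeasureTheory.Measure

lemma compProd_eq_prod_iff {α γ : Type*} [MeasurableSpace α] [MeasurableSpace γ]
    [MeasurableSpace.CountableOrCountablyGenerated α γ] {μ : Measure α} [IsFiniteMeasure μ]
    {κ : Kernel α γ} [IsFiniteKernel κ] {ρ : Measure γ} [IsFiniteMeasure ρ] :
    μ ⊗ₘ κ = μ.prod ρ ↔ ∀ᵐ a ∂μ, κ a = ρ := by
  rw [← compProd_const, Kernel.compProd_eq_iff]
  rfl

lemma ae_iff_ae_ae_of_map_swap_eq_compProd {α β : Type*} [MeasurableSpace α]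
    [MeasurableSpace β] {ν : Measure (α × β)} [SFinite ν] {π : Kernel β α} [IsSFiniteKernel π]
    (hπ : ν.map Prod.swap = ν.snd ⊗ₘ π) {p : α × β → Prop} (hp : MeasurableSet {z | p z}) :
    (∀ᵐ z ∂ν, p z) ↔ ∀ᵐ b ∂ν.snd, ∀ᵐ a ∂π b, p (a, b) := by
  have hp_swap : MeasurableSet {w : β × α | p w.swap} := measurable_swap hp
  calc (∀ᵐ z ∂ν, p z) ↔ ∀ᵐ w ∂ν.map Prod.swap, p w.swap := by
        rw [ae_map_iff measurable_swap.aemeasurable hp_swap]; rfl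
    _ ↔ _ := hπ ▸ ae_compProd_iff hp_swap

end MeasureTheory.Measure

theorem conditioning_gap_zero_iff_sufficient_general
    {E E' F : Type*} [MeasurableSpace E]
    [MeasurableSpace E']
    [MeasurableSpace F] [StandardBorelSpace F]
    (μ : Measure E)
    (R : Kernel E E')
    (P : Kernel E F) [IsMarkovKernel P]
    (π : Kernel E' E) [IsMarkovKernel π]
    -- `π` is a regular conditional distribution of `X` given `X̃`
    (hπ : (μ ⊗ₘ R).map Prod.swap = ((μ ⊗ₘ R).snd) ⊗ₘ π) :
    ((∫⁻ z, klDiv (P z.1) ((P ∘ₖ π) z.2) ∂(μ ⊗ₘ R)) = 0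
      ↔ ∀ᵐ z ∂(μ ⊗ₘ R), P z.1 = (P ∘ₖ π) z.2)
    ∧ ((∫⁻ z, klDiv (P z.1) ((P ∘ₖ π) z.2) ∂(μ ⊗ₘ R)) = 0
      ↔ ∀ᵐ x' ∂((μ ⊗ₘ R).snd),
          (π x') ⊗ₘ P = (π x').prod ((P ∘ₖ π) x')) := by
  have h_gap : (∫⁻ z, klDiv (P z.1) ((P ∘ₖ π) z.2) ∂(μ ⊗ₘ R)) = 0
      ↔ ∀ᵐ z ∂(μ ⊗ₘ R), P z.1 = (P ∘ₖ π) z.2 :=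
    Kernel.lintegral_klDiv_eq_zero_iff _ (P.prodMkRight E') ((P ∘ₖ π).prodMkLeft E)
  have h_sufficient : (∀ᵐ z ∂(μ ⊗ₘ R), P z.1 = (P ∘ₖ π) z.2)
      ↔ ∀ᵐ x' ∂((μ ⊗ₘ R).snd), (π x') ⊗ₘ P = (π x').prod ((P ∘ₖ π) x') := by
    simp_rw [Measure.compProd_eq_prod_iff]
    exact Measure.ae_iff_ae_ae_of_map_swap_eq_compProd hπ
      (Kernel.measurableSet_eq (P.prodMkRight E') ((P ∘ₖ π).prodMkLeft E))
  exact ⟨h_gap, h_gap.trans h_sufficient⟩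

/-- **Equality case in Corollary C.4: sufficiency of the corrupted observation.**
`X ∼ μ` on `E`, `X̃` is generated from `X` by the Markov kernel `R : E → Ẽ` (joint law
`μ ⊗ₘ R`), `X_t` is generated from `X` by the Markov kernel `P : E → F`, conditionally
independently of `X̃` given `X`; `π` is a regular conditional distribution of `X` given
`X̃` and `P̄ = P ∘ₖ π` the posterior-predictive kernel. Then
`E[KL(P(X) ‖ P̄(X̃))] = 0` if and only if `P(X) = P̄(X̃)` almost surely, which holds
if and only if `X_t` and `X` are conditionally independent given `X̃` (the conditional
joint law `(π x̃) ⊗ₘ P` factorizes as the product `(π x̃) × (P̄ x̃)` for a.e. `x̃`),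
i.e. exactly when `X̃` is a sufficient statistic of `X` for `X_t`. -/
theorem conditioning_gap_zero_iff_sufficient
    {E E' F : Type*} [MeasurableSpace E] [StandardBorelSpace E]
    [MeasurableSpace E'] [StandardBorelSpace E']
    [MeasurableSpace F] [StandardBorelSpace F]
    (μ : Measure E) [IsProbabilityMeasure μ]
    (R : Kernel E E') [IsMarkovKernel R]
    (P : Kernel E F) [IsMarkovKernel P]
    (π : Kernel E' E) [IsMarkovKernel π]
    -- `π` is a regular conditional distribution of `X` given `X̃`
    (hπ : (μ ⊗ₘ R).map Prod.swap = ((μ ⊗ₘ R).snd) ⊗ₘ π) :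
    ((∫⁻ z, klDiv (P z.1) ((P ∘ₖ π) z.2) ∂(μ ⊗ₘ R)) = 0
      ↔ ∀ᵐ z ∂(μ ⊗ₘ R), P z.1 = (P ∘ₖ π) z.2)
    ∧ ((∫⁻ z, klDiv (P z.1) ((P ∘ₖ π) z.2) ∂(μ ⊗ₘ R)) = 0
      ↔ ∀ᵐ x' ∂((μ ⊗ₘ R).snd),
          (π x') ⊗ₘ P = (π x').prod ((P ∘ₖ π) x')) :=
  conditioning_gap_zero_iff_sufficient_general μ R P π hπ
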